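/- Mutual exclusion of conflicting transitions: if two transitions t₁ and t₂ share an input place p (p ∈ pre t₁ ∩ pre t₂), the net is such that no transition has p in its postset, and p carries a single token initially, then in any firing sequence from the initial marking at most one of t₁, t₂ fires. -/
import Mathlib


/-- Firing transition `t` from marking `M`: remove the preset, add the postset. -/
def fire {P T : Type*} (pre post : T → Set P) (M : Set P) (t : T) : Set P :=
  (M \ pre t) ∪ post t

lemma not_mem_foldl_fire {P T : Type*} (pre post : T → Set P) (p : P)
    (hnever : ∀ t, p ∉ post t) : ∀ (l : List T) (M : Set P), p ∉ M →
    p ∉ l.foldl (fire pre post) M := by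
  intro l
  induction l with
  | nil => intro M h; exact h
  | cons t l ih =>
    intro M h
    apply ih
    rintro (⟨hM, _⟩ | hpost)
    · exact h hM
    · exact hnever t hpost

theorem conflicting_transitions_mutual_exclusion {P T : Type*}
    (pre post : T → Set P) (p : P) (t₁ t₂ : T)
    (hp₁ : p ∈ pre t₁) (hp₂ : p ∈ pre t₂) (hne : t₁ ≠ t₂)
    (hnever : ∀ t, p ∉ post t)
    (M0 : Set P) (hp0 : p ∈ M0)
    (σ : List T)
    (henabled : ∀ i : Fin σ.length,
      pre (σ.get i) ⊆ (σ.take i).foldl (fire pre post) M0) :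
    ¬(t₁ ∈ σ ∧ t₂ ∈ σ) := by
  rintro ⟨h1, h2⟩
  obtain ⟨i, hi⟩ := List.get_of_mem h1
  obtain ⟨j, hj⟩ := List.get_of_mem h2
  have hij : i ≠ j := by
    intro e; apply hne; rw [← hi, ← hj, e]
  have key : ∀ (a b : Fin σ.length), (a : ℕ) < (b : ℕ) → p ∈ pre (σ.get a) →
      p ∈ pre (σ.get b) → False := by
    intro a b hab ha hb
    have hb' := henabled b hb
    apply absurd hb'
    have hdecomp : σ.take (b : ℕ) = σ.take ((a : ℕ)+1) ++ (σ.drop ((a : ℕ)+1)).take ((b : ℕ) - ((a : ℕ)+1)) := by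
      rw [← List.take_add]
      congr 1
      omega
    rw [hdecomp, List.foldl_append]
    apply not_mem_foldl_fire pre post p hnever
    have htake : σ.take ((a : ℕ)+1) = σ.take (a : ℕ) ++ [σ.get a] := by
      rw [List.take_succ]
      congr
      simp [List.getElem?_eq_getElem a.isLt]
    rw [htake, List.foldl_append]
    simp only [List.foldl_cons, List.foldl_nil]
    rintro (⟨_, hnp⟩ | hpost)
    · exact hnp ha
    · exact hnever _ hpost
  rcases lt_or_gt_of_ne hij with h | h
  · exact key i j h (hi ▸ hp₁) (hj ▸ hp₂)
  · exact key j i h (hj ▸ hp₂) (hi ▸ hp₁)
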